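/- arXiv:1106.2616 — 5 statements merged into one kernel-verified Lean document; each statement's English description precedes it below -/
import Mathlib

section
/- Let ρ : ℤ≥0 → ℤ≥0 satisfy ρ(0) = 0 and ρ(1) = 1. Then the set P_2(ρ) is nonempty if and only if ρ ∈ W, i.e., ρ is weakly increasing with steps at most 1 and ρ(k) ≥ min(k, 2) for all k. -/
/-- W': weakly increasing, ρ 0 = 0, steps at most 1. -/
def Wprime (ρ : ℕ → ℕ) : Prop :=
  Monotone ρ ∧ ρ 0 = 0 ∧ ∀ k, ρ (k + 1) ≤ ρ k + 1

/-- W = {ρ ∈ W' : ρ k ≥ min k 2}. -/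
def Wset (ρ : ℕ → ℕ) : Prop :=
  Wprime ρ ∧ ∀ k, min k 2 ≤ ρ k

/-- Standard numerical perversity of level n. -/
def Pn (n : ℕ) (p : ℕ → ℕ) : Prop :=
  p 0 = 0 ∧ 0 < p n ∧ p n < n ∧ Monotone p ∧ Monotone (fun k => k - p k)

/-- The perversity p⁺ₙ. -/
def piPlus (n : ℕ) (p : ℕ → ℕ) (k : ℕ) : ℕ :=
  if n - p n ≤ k - p k then p k + 1 else p k

/-- P_n(ρ). -/
def PnRho (n : ℕ) (ρ p : ℕ → ℕ) : Prop :=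
  Pn n p ∧ (∀ k, piPlus n p k ≤ ρ k) ∧ ∀ k, n ≤ k → piPlus n p k = ρ k

/-- The minimal element π_{ρ,n}. -/
def piMin (ρ : ℕ → ℕ) (n k : ℕ) : ℕ :=
  if k < n then k - (n - ρ n + 1) else ρ k - 1

/-!
For `p ∈ P₂` we have `p 2 = 1`, and monotonicity of `k ↦ k - p k` gives `k - p k ≥ 2 - p 2` for
`k ≥ 2`, so `p⁺ = p + 1` there. Membership in `P₂(ρ)` therefore forces `ρ = p + 1` on `[2, ∞)`, and
the monotonicity of `p` and of `k ↦ k - p k` become the monotonicity and unit steps of `ρ`.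
Conversely, for `ρ ∈ W` the minimal perversity `π_{ρ,2} = (0, 0, ρ 2 - 1, ρ 3 - 1, …)` lies in `P₂(ρ)`.
-/

variable {n k : ℕ} {ρ p : ℕ → ℕ}

theorem Pn.sub_apply_le_sub_apply (hp : Pn n p) (hk : n ≤ k) : n - p n ≤ k - p k :=
  hp.2.2.2.2 hk

theorem Pn.apply_lt_self (hp : Pn n p) (hk : n ≤ k) : p k < k := by
  have := hp.sub_apply_le_sub_apply hk
  have := hp.2.2.1
  omega

theorem Pn.apply_succ_le (hp : Pn n p) (hk : n ≤ k) : p (k + 1) ≤ p k + 1 := by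
  have hsub : k - p k ≤ k + 1 - p (k + 1) := hp.2.2.2.2 k.le_succ
  have := hp.apply_lt_self hk
  have := hp.apply_lt_self (hk.trans k.le_succ)
  omega

theorem Pn.two_apply_two (hp : Pn 2 p) : p 2 = 1 := by
  have := hp.2.1
  have := hp.2.2.1
  omega

theorem piPlus_of_le (hp : Pn n p) (hk : n ≤ k) : piPlus n p k = p k + 1 :=
  if_pos (hp.sub_apply_le_sub_apply hk)

theorem PnRho.apply_eq (h : PnRho n ρ p) (hk : n ≤ k) : ρ k = p k + 1 :=
  (h.2.2 k hk).symm.trans (piPlus_of_le h.1 hk)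

theorem wset_of_pnRho_two (h : PnRho 2 ρ p) (h0 : ρ 0 = 0) (h1 : ρ 1 = 1) : Wset ρ := by
  have hp := h.1
  have h2 : ρ 2 = 2 := by rw [h.apply_eq le_rfl, hp.two_apply_two]
  have hρ (k : ℕ) : ρ (k + 2) = p (k + 2) + 1 := h.apply_eq (by omega)
  refine ⟨⟨monotone_nat_of_le_succ fun k => ?_, h0, fun k => ?_⟩, fun k => ?_⟩
  · match k with
    | 0 => simp [h0]
    | 1 => simp [h1, h2]
    | k + 2 => rw [hρ, hρ]; exact Nat.succ_le_succ (hp.2.2.2.1 (k + 2).le_succ)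
  · match k with
    | 0 => simp [h0, h1]
    | 1 => simp [h1, h2]
    | k + 2 => rw [hρ, hρ]; exact Nat.succ_le_succ (hp.apply_succ_le (by omega))
  · match k with
    | 0 => simp
    | 1 => simp [h1]
    | k + 2 =>
      have : 1 ≤ p (k + 2) := hp.two_apply_two ▸ hp.2.2.2.1 (by omega)
      rw [hρ]
      omega

theorem Wprime.apply_le_self (hρ : Wprime ρ) (k : ℕ) : ρ k ≤ k := by
  induction k with
  | zero => exact hρ.2.1.le
  | succ k ih => exact (hρ.2.2 k).trans (by omega)

theorem Wset.apply_two (hρ : Wset ρ) : ρ 2 = 2 :=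
  le_antisymm (hρ.1.apply_le_self 2) (hρ.2 2)

theorem piMin_of_lt_of_apply_eq (hk : k < n) (hn : ρ n = n) : piMin ρ n k = k - 1 := by
  rw [piMin, if_pos hk, hn, Nat.sub_self]

theorem piMin_of_le (hk : n ≤ k) : piMin ρ n k = ρ k - 1 :=
  if_neg (Nat.not_lt.2 hk)

theorem Wset.two_le_apply (hρ : Wset ρ) (hk : 2 ≤ k) : 2 ≤ ρ k := by
  simpa [hk] using hρ.2 k

theorem Wset.piMin_two_of_lt (hρ : Wset ρ) (hk : k < 2) : piMin ρ 2 k = 0 := by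
  rw [piMin_of_lt_of_apply_eq hk hρ.apply_two]
  omega

theorem Wset.piMin_two_two (hρ : Wset ρ) : piMin ρ 2 2 = 1 := by
  rw [piMin_of_le le_rfl, hρ.apply_two]

theorem Wset.pn_two_piMin (hρ : Wset ρ) : Pn 2 (piMin ρ 2) := by
  have h0 := hρ.piMin_two_of_lt (k := 0) (by norm_num)
  have h1 := hρ.piMin_two_of_lt (k := 1) (by norm_num)
  have h2 := hρ.piMin_two_two
  refine ⟨h0, by omega, by omega, monotone_nat_of_le_succ fun k => ?_,
    monotone_nat_of_le_succ fun k => ?_⟩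
  · match k with
    | 0 => omega
    | 1 => omega
    | k + 2 =>
      rw [piMin_of_le (by omega), piMin_of_le (by omega)]
      exact Nat.sub_le_sub_right (hρ.1.1 (k + 2).le_succ) 1
  · match k with
    | 0 => simp only [h0, h1]; omega
    | 1 => simp only [h1, h2]; omega
    | k + 2 =>
      have := hρ.1.2.2 (k + 2)
      have := hρ.two_le_apply (k := k + 2) (by omega)
      have := hρ.1.apply_le_self (k + 2)
      simp only [piMin_of_le (show 2 ≤ k + 2 by omega), piMin_of_le (show 2 ≤ k + 2 + 1 by omega)]
      omega

theorem Wset.pnRho_two_piMin (hρ : Wset ρ) : PnRho 2 ρ (piMin ρ 2) := by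
  have hp := hρ.pn_two_piMin
  have hρk {k : ℕ} (hk : 2 ≤ k) : piPlus 2 (piMin ρ 2) k = ρ k := by
    rw [piPlus_of_le hp hk, piMin_of_le hk]
    have := hρ.two_le_apply hk
    omega
  refine ⟨hp, fun k => ?_, fun k => hρk⟩
  rcases Nat.lt_or_ge k 2 with hk | hk
  · have := hρ.2 k
    rw [piPlus, hρ.piMin_two_of_lt hk, hρ.piMin_two_two]
    split_ifs <;> omega
  · exact (hρk hk).le

theorem P2rho_nonempty_iff (ρ : ℕ → ℕ) (h0 : ρ 0 = 0) (h1 : ρ 1 = 1) :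
    (∃ p, PnRho 2 ρ p) ↔ Wset ρ :=
  ⟨fun ⟨_, h⟩ => wset_of_pnRho_two h h0 h1, fun hρ => ⟨piMin ρ 2, hρ.pnRho_two_piMin⟩⟩
end

section
/- For ρ ∈ W and n ≥ 2, let m be the largest index with ρ(m) < ρ(n). The function π̂_{ρ,n} defined by π̂_{ρ,n}(k) = ρ(k) for k ≤ m and π̂_{ρ,n}(k) = ρ(k) - 1 for k ≥ m+1 belongs to P_n(ρ). -/
/-!
`π̂` is `ρ` minus the indicator of `(m, ∞)`. Since `ρ` jumps past `ρ m` right after `m`, subtracting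
this indicator keeps `π̂` monotone, while `k - π̂ k = (k - ρ k) + [m < k]` is a sum of monotone
functions. Taking `π̂⁺` adds the `1` back exactly where `k > m` and `k - ρ k ≥ n - ρ n`, in
particular for all `k ≥ n`, because `k ↦ k - ρ k` is monotone for every `ρ ∈ W'`.
-/

namespace Wprime

variable {ρ : ℕ → ℕ}

theorem le_self (hρ : Wprime ρ) (k : ℕ) : ρ k ≤ k := by
  induction k with
  | zero => exact hρ.2.1.le
  | succ k ih => exact (hρ.2.2 k).trans (Nat.succ_le_succ ih)

theorem monotone_id_sub (hρ : Wprime ρ) : Monotone fun k => k - ρ k := by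
  refine monotone_nat_of_le_succ fun k => ?_
  have hstep := hρ.2.2 k
  have hle := hρ.le_self k
  omega

end Wprime

def piHat (ρ : ℕ → ℕ) (m k : ℕ) : ℕ :=
  if k ≤ m then ρ k else ρ k - 1

section piHat

variable {ρ : ℕ → ℕ} {m k : ℕ}

theorem piHat_of_le (h : k ≤ m) : piHat ρ m k = ρ k := if_pos h

theorem piHat_of_lt (h : m < k) : piHat ρ m k = ρ k - 1 := if_neg h.not_ge

theorem monotone_piHat (hmono : Monotone ρ) (hjump : ∀ j, m < j → ρ m < ρ j) :
    Monotone (piHat ρ m) := by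
  intro k j hkj
  rcases le_or_gt k m with hk | hk
  · rcases le_or_gt j m with hj | hj
    · simpa only [piHat_of_le hk, piHat_of_le hj] using hmono hkj
    · have := hmono hk
      have := hjump j hj
      rw [piHat_of_le hk, piHat_of_lt hj]
      omega
  · rw [piHat_of_lt hk, piHat_of_lt (hk.trans_le hkj)]
    exact Nat.sub_le_sub_right (hmono hkj) 1

theorem id_sub_piHat (hρ : Wprime ρ) (hjump : ∀ j, m < j → ρ m < ρ j) (k : ℕ) :
    k - piHat ρ m k = k - ρ k + if m < k then 1 else 0 := by
  have hle := hρ.le_self k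
  rcases le_or_gt k m with hk | hk
  · rw [piHat_of_le hk, if_neg hk.not_gt, Nat.add_zero]
  · have := hjump k hk
    rw [piHat_of_lt hk, if_pos hk]
    omega

theorem monotone_id_sub_piHat (hρ : Wprime ρ) (hjump : ∀ j, m < j → ρ m < ρ j) :
    Monotone fun k => k - piHat ρ m k := by
  have hind : Monotone fun k => if m < k then 1 else 0 := by
    intro k j hkj
    dsimp only
    split_ifs <;> omega
  simpa only [id_sub_piHat hρ hjump] using hρ.monotone_id_sub.add hind

theorem piPlus_piHat {n : ℕ} (hρ : Wprime ρ) (hjump : ∀ j, m < j → ρ m < ρ j) (hmn : m < n)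
    (k : ℕ) :
    piPlus n (piHat ρ m) k = if m < k ∧ k - ρ k < n - ρ n then ρ k - 1 else ρ k := by
  have hk := id_sub_piHat hρ hjump k
  have hn := id_sub_piHat hρ hjump n
  rw [if_pos hmn] at hn
  unfold piPlus
  rw [hk, hn]
  rcases le_or_gt k m with hkm | hkm
  · have : k - ρ k ≤ n - ρ n := hρ.monotone_id_sub (hkm.trans hmn.le)
    rw [if_neg hkm.not_gt, if_neg (by omega), piHat_of_le hkm, if_neg (by omega)]
  · have := hjump k hkm
    rw [if_pos hkm, piHat_of_lt hkm]
    split_ifs <;> omega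

end piHat

theorem piHat_mem_PnRho (ρ : ℕ → ℕ) (n m : ℕ) (hρ : Wset ρ) (hn : 2 ≤ n)
    (hm : ρ m < ρ n) (hmax : ∀ k, ρ k < ρ n → k ≤ m) :
    PnRho n ρ (fun k => if k ≤ m then ρ k else ρ k - 1) := by
  obtain ⟨hW, hmin⟩ := hρ
  have hmn : m < n := hW.1.reflect_lt hm
  have hjump : ∀ j, m < j → ρ m < ρ j := fun j hj =>
    hm.trans_le (not_lt.mp fun h => (hmax j h).not_gt hj)
  have hρn : 2 ≤ ρ n := by simpa only [min_eq_right hn] using hmin n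
  have hρn_le := hW.le_self n
  change PnRho n ρ (piHat ρ m)
  refine ⟨⟨piHat_of_le (Nat.zero_le m) ▸ hW.2.1, ?_, ?_,
    monotone_piHat hW.1 hjump, monotone_id_sub_piHat hW hjump⟩, fun k => ?_, fun k hk => ?_⟩
  · rw [piHat_of_lt hmn]; omega
  · rw [piHat_of_lt hmn]; omega
  · rw [piPlus_piHat hW hjump hmn]
    split_ifs <;> omega
  · have : n - ρ n ≤ k - ρ k := hW.monotone_id_sub hk
    rw [piPlus_piHat hW hjump hmn, if_neg (by omega)]
end

section
/- For any ρ ∈ W and n ≥ 2, π_{ρ,n} is the unique minimum element of P_n(ρ): every π ∈ P_n(ρ) satisfies π_{ρ,n}(k) ≤ π(k) for all k. -/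
lemma step_bound {ρ : ℕ → ℕ} (hs : ∀ k, ρ (k + 1) ≤ ρ k + 1) (k m : ℕ) :
    ρ (k + m) ≤ ρ k + m := by
  induction m with
  | zero => simp
  | succ m ih => calc ρ (k + (m+1)) = ρ ((k+m)+1) := by ring_nf
        _ ≤ ρ (k+m) + 1 := hs _
        _ ≤ ρ k + (m+1) := by omega

lemma rho_le {ρ : ℕ → ℕ} (h0 : ρ 0 = 0) (hs : ∀ k, ρ (k + 1) ≤ ρ k + 1) (k : ℕ) :
    ρ k ≤ k := by
  have := step_bound hs 0 k; simpa [h0] using this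

theorem piMin_is_minimum (ρ : ℕ → ℕ) (n : ℕ) (hρ : Wset ρ) (hn : 2 ≤ n) :
    PnRho n ρ (piMin ρ n) ∧ ∀ p, PnRho n ρ p → ∀ k, piMin ρ n k ≤ p k := by
  obtain ⟨⟨hmono, h0, hs⟩, hmin⟩ := hρ
  have hle : ∀ k, ρ k ≤ k := rho_le h0 hs
  have hstepb : ∀ k m, ρ (k + m) ≤ ρ k + m := step_bound hs
  have hρn2 : 2 ≤ ρ n := by have := hmin n; omega
  have hρnn : ρ n ≤ n := hle n
  have hb : ∀ k, k ≤ n → ρ n ≤ ρ k + (n - k) := by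
    intro k hk
    have := hstepb k (n - k)
    rwa [Nat.add_sub_cancel' hk] at this
  -- values of piMin
  have hval1 : ∀ k, k < n → piMin ρ n k = k - (n - ρ n + 1) := by
    intro k hk; simp [piMin, hk]
  have hval2 : ∀ k, n ≤ k → piMin ρ n k = ρ k - 1 := by
    intro k hk; simp [piMin, Nat.not_lt.mpr hk]
  have hvn : piMin ρ n n = ρ n - 1 := hval2 n le_rfl
  -- piMin is in Pn
  have hPn : Pn n (piMin ρ n) := by
    refine ⟨?_, ?_, ?_, ?_, ?_⟩
    · rw [hval1 0 (by omega)]; omega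
    · rw [hvn]; omega
    · rw [hvn]; omega
    · apply monotone_nat_of_le_succ
      intro k
      rcases lt_trichotomy (k+1) n with h | h | h
      · rw [hval1 k (by omega), hval1 (k+1) h]; omega
      · rw [hval1 k (by omega), hval2 (k+1) h.ge, h]; omega
      · rw [hval2 k (by omega), hval2 (k+1) (by omega)]
        have := hmono (by omega : k ≤ k + 1); omega
    · apply monotone_nat_of_le_succ
      intro k
      show k - piMin ρ n k ≤ (k+1) - piMin ρ n (k+1)
      rcases lt_trichotomy (k+1) n with h | h | h
      · rw [hval1 k (by omega), hval1 (k+1) h]; omega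
      · rw [hval1 k (by omega), hval2 (k+1) h.ge, h]; omega
      · rw [hval2 k (by omega), hval2 (k+1) (by omega)]
        have h1 := hs k
        have h2 := hle k
        have h3 := hmin k
        omega
  -- piPlus facts for piMin
  have hgap : n - piMin ρ n n = n - ρ n + 1 := by rw [hvn]; omega
  have hplus_lt : ∀ k, k < n → piPlus n (piMin ρ n) k ≤ ρ k := by
    intro k hk
    unfold piPlus
    rw [hgap, hval1 k hk]
    have hbk := hb k hk.le
    split <;> omega
  have hplus_ge : ∀ k, n ≤ k → piPlus n (piMin ρ n) k = ρ k := by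
    intro k hk
    unfold piPlus
    rw [hgap, hval2 k hk]
    have h1 := hmono hk
    have h2 := hle k
    have h3 := hstepb n (k - n)
    rw [Nat.add_sub_cancel' hk] at h3
    split <;> omega
  refine ⟨⟨hPn, ?_, hplus_ge⟩, ?_⟩
  · intro k
    rcases lt_or_ge k n with h | h
    · exact hplus_lt k h
    · exact (hplus_ge k h).le
  · intro p ⟨⟨hp0, hpn1, hpn2, hpm, hpm'⟩, hple, hpeq⟩ k
    have hpn : p n + 1 = ρ n := by
      have := hpeq n le_rfl
      unfold piPlus at this
      simp at this
      omega
    rcases lt_or_ge k n with h | h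
    · rw [hval1 k h]
      have : k - p k ≤ n - p n := hpm' h.le
      omega
    · rw [hval2 k h]
      have := hpeq k h
      unfold piPlus at this
      split at this <;> omega
end

section
/- For any ρ ∈ W and n ≥ 2, π̂_{ρ,n} is the unique maximum element of P_n(ρ): every π ∈ P_n(ρ) satisfies π(k) ≤ π̂_{ρ,n}(k) for all k. -/
theorem piHat_is_maximum (ρ : ℕ → ℕ) (n m : ℕ) (hρ : Wset ρ) (hn : 2 ≤ n)
    (hm : ρ m < ρ n) (hmax : ∀ k, ρ k < ρ n → k ≤ m) :
    PnRho n ρ (fun k => if k ≤ m then ρ k else ρ k - 1) ∧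
    ∀ p, PnRho n ρ p → ∀ k, p k ≤ if k ≤ m then ρ k else ρ k - 1 := by
  obtain ⟨⟨hmono, h0, hstep⟩, hmin⟩ := hρ
  have hle : ∀ k, ρ k ≤ k := by
    intro k
    induction k with
    | zero => omega
    | succ k ih => have := hstep k; omega
  have hsub : Monotone (fun k => k - ρ k) := by
    apply monotone_nat_of_le_succ
    intro k
    have := hstep k; have := hle k
    show k - ρ k ≤ k + 1 - ρ (k + 1)
    omega
  have hρn2 : 2 ≤ ρ n := by have := hmin n; omega
  have hρnn : ρ n ≤ n := hle n
  have hmn : m < n := by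
    by_contra h
    push_neg at h
    have := hmono h
    omega
  have hge : ∀ k, m < k → ρ n ≤ ρ k := by
    intro k hk
    by_contra h
    push_neg at h
    have := hmax k h
    omega
  have hEq : ∀ k, m < k → k ≤ n → ρ k = ρ n := by
    intro k hk1 hk2
    have := hge k hk1
    have := hmono hk2
    omega
  have hm1 : ρ (m + 1) = ρ m + 1 ∧ ρ n = ρ m + 1 := by
    have h1 := hge (m + 1) (by omega)
    have h2 := hstep m
    omega
  set π : ℕ → ℕ := fun k => if k ≤ m then ρ k else ρ k - 1 with hπ
  have hπval : ∀ k, π k = if k ≤ m then ρ k else ρ k - 1 := fun k => rfl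
  have hπn : π n = ρ n - 1 := by rw [hπval, if_neg (by omega)]
  have hπ0 : π 0 = 0 := by rw [hπval, if_pos (Nat.zero_le m)]; exact h0
  have hπle : ∀ k, π k ≤ ρ k := by intro k; rw [hπval]; split <;> omega
  have hπstep : ∀ k, π k ≤ π (k + 1) ∧ π (k + 1) ≤ π k + 1 := by
    intro k
    rw [hπval, hπval]
    have := hstep k
    have h1 : ρ k ≤ ρ (k + 1) := hmono (Nat.le_succ k)
    rcases lt_trichotomy k m with h | h | h
    · rw [if_pos (by omega), if_pos (by omega)]; omega
    · subst h
      have h2 := hm1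
      have h3 := hge (k + 1) (by omega)
      rw [if_pos le_rfl, if_neg (by omega)]
      omega
    · have h2 := hge k h
      have h3 := hge (k + 1) (by omega)
      rw [if_neg (by omega), if_neg (by omega)]
      omega
  have hπmono : Monotone π := monotone_nat_of_le_succ fun k => (hπstep k).1
  have hπsub : Monotone (fun k => k - π k) := by
    apply monotone_nat_of_le_succ
    intro k
    have := (hπstep k).2
    have := hπle k
    have := hle k
    show k - π k ≤ k + 1 - π (k + 1)
    omega
  have hcond : ∀ k, (n - π n ≤ k - π k) ↔ (n - ρ n + 1 ≤ k - π k) := by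
    intro k; rw [hπn]; omega
  constructor
  · refine ⟨⟨hπ0, by rw [hπn]; omega, by rw [hπn]; omega, hπmono, hπsub⟩, ?_, ?_⟩
    · intro k
      unfold piPlus
      rcases le_or_gt k m with h | h
      · have hkρ : π k = ρ k := by rw [hπval, if_pos h]
        have hsk : k - ρ k ≤ n - ρ n := hsub (le_of_lt (lt_of_le_of_lt h hmn))
        rw [if_neg]
        · omega
        · rw [hπn, hkρ]; omega
      · have hkρ : π k = ρ k - 1 := by rw [hπval, if_neg (by omega)]
        have := hge k h
        split <;> omega
    · intro k hk
      unfold piPlus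
      have hkρ : π k = ρ k - 1 := by rw [hπval, if_neg (by omega)]
      have := hge k (by omega)
      have hsk : n - ρ n ≤ k - ρ k := hsub hk
      have := hle k
      rw [if_pos]
      · omega
      · rw [hπn, hkρ]; omega
  · rintro p ⟨⟨hp0, hpn1, hpn2, hpmono, hpsub⟩, hple, hpeq⟩ k
    have hplePlus : ∀ j, p j ≤ piPlus n p j := by
      intro j; unfold piPlus; split <;> omega
    have hpnval : p n = ρ n - 1 := by
      have := hpeq n le_rfl
      unfold piPlus at this
      rw [if_pos le_rfl] at this
      omega
    rcases le_or_gt k m with h | h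
    · rw [if_pos h]
      exact le_trans (hplePlus k) (hple k)
    · rw [if_neg (by omega)]
      rcases le_or_gt n k with hk | hk
      · have := hpeq k hk
        unfold piPlus at this
        have hsk : n - p n ≤ k - p k := hpsub hk
        rw [if_pos hsk] at this
        omega
      · have := hpmono (le_of_lt hk)
        have := hEq k h (by omega)
        omega
end

section
/- Let ρ ∈ W and n ≥ 2, let p⁺_ρ be as defined, and suppose a function D : ℤ≥0 → ℤ≥0 (modeling depth as a function of codimension) satisfies D(c) ≥ ρ(c) for c ≥ n, D(c) ≥ ρ(n) − (n − c) for n − ρ(n) + 1 ≤ c < n, and D(c) ≥ 0 for c ≤ n − ρ(n). Then D(c) ≥ π_{ρ,n}⁺(c) for all c, where π_{ρ,n} is the minimum element of P_n(ρ); conversely D ≥ π_{ρ,n}⁺ implies the three displayed inequalities. -/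
/-
For `π = π_{ρ,n}`, `π⁺ c` equals `ρ c` for `c ≥ n` and `ρ n - (n - c)` for `c < n` (truncated,
so `0` for `c ≤ n - ρ n`). Below `n`, `c - π c` stays equal to `n - π n` once `π` starts growing,
so `π⁺` adds one exactly there; above `n`, `c - π c ≥ n - π n` since `k ↦ k - ρ k` is monotone.
In this closed form the three depth conditions are `π⁺ ≤ D` on the three ranges of `c`.
-/
theorem Wprime.le_self_s19 {ρ : ℕ → ℕ} (hρ : Wprime ρ) (k : ℕ) : ρ k ≤ k := by
  induction k with
  | zero => exact hρ.2.1.le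
  | succ k ih => have := hρ.2.2 k; omega

theorem Wprime.monotone_sub_self {ρ : ℕ → ℕ} (hρ : Wprime ρ) : Monotone fun k => k - ρ k :=
  monotone_nat_of_le_succ fun k => by have := hρ.2.2 k; omega

theorem Wset.pos {ρ : ℕ → ℕ} (hρ : Wset ρ) {k : ℕ} (hk : 0 < k) : 0 < ρ k := by
  have := hρ.2 k; omega

section piPlus_piMin

variable {ρ : ℕ → ℕ} {n c : ℕ}

theorem piPlus_piMin_of_le (hρ : Wprime ρ) (hpos : 0 < ρ n) (hc : n ≤ c) :
    piPlus n (piMin ρ n) c = ρ c := by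
  have hρc : ρ n ≤ ρ c := hρ.1 hc
  have hsub : n - ρ n ≤ c - ρ c := hρ.monotone_sub_self hc
  have hle := hρ.le_self_s19 c
  simp only [piPlus, piMin, lt_irrefl, if_false, not_lt.2 hc]
  split_ifs <;> omega

theorem piPlus_piMin_of_lt (hpos : 0 < ρ n) (hle : ρ n ≤ n) (hc : c < n) :
    piPlus n (piMin ρ n) c = ρ n - (n - c) := by
  simp only [piPlus, piMin, lt_irrefl, if_false, hc, if_true]
  split_ifs <;> omega

end piPlus_piMin

theorem depth_conditions_iff_piPlus (ρ : ℕ → ℕ) (n : ℕ) (D : ℕ → ℕ)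
    (hρ : Wset ρ) (hn : 2 ≤ n) :
    ((∀ c, n ≤ c → ρ c ≤ D c) ∧
     (∀ c, n - ρ n + 1 ≤ c → c < n → ρ n - (n - c) ≤ D c) ∧
     (∀ c, c ≤ n - ρ n → 0 ≤ D c)) ↔
    (∀ c, piPlus n (piMin ρ n) c ≤ D c) := by
  have hpos : 0 < ρ n := hρ.pos (by omega)
  have hle : ρ n ≤ n := hρ.1.le_self_s19 n
  have of_le {c} (hc : n ≤ c) := piPlus_piMin_of_le hρ.1 hpos hc
  have of_lt {c} (hc : c < n) := piPlus_piMin_of_lt hpos hle hc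
  constructor
  · rintro ⟨hge, hmid, -⟩ c
    rcases le_or_gt n c with hc | hc
    · exact of_le hc ▸ hge c hc
    · rw [of_lt hc]
      by_cases hlow : n - ρ n + 1 ≤ c
      · exact hmid c hlow hc
      · omega
  · intro h
    refine ⟨fun c hc => of_le hc ▸ h c, fun c _ hc => of_lt hc ▸ h c, fun _ _ => Nat.zero_le _⟩
end
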